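/- Trimming preserves efficiency: let Σ_nml = Σ_trn^cs ⊙ Σ_tst^cs (critical section and remainder), let Σ_new be a future normal dataset, and suppose |MSS|_min(Σ_tst^cs|Σ_trn^cs) = λ > 0. Then for any intrusive dataset Σ_int with |MFS|_min(Σ_int|Σ_nml ⊙ Σ_new) ≤ λ: if |MSS|_min(Σ_new|Σ_nml) ≥ |MFS|_min(Σ_int|Σ_nml ⊙ Σ_new), then |MSS|_min(Σ_tst^cs ⊙ Σ_new|Σ_trn^cs) ≥ |MFS|_min(Σ_int|Σ_nml ⊙ Σ_new). -/
import Mathlib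


open List

variable {α : Type*}

def SS (s : List α) (l : ℕ) : Set (List α) := {S | S.length = l ∧ S <:+: s}

/-- `|MSS|_min` (in `ℕ∞`) for a target with substring sets `SST` w.r.t. a reference
with substring sets `SSR`. -/
noncomputable def mssE (SST SSR : ℕ → Set (List α)) : ℕ∞ :=
  sSup ((fun n : ℕ => (n : ℕ∞)) '' {l : ℕ | ∀ l' ≤ l, SST l' ⊆ SSR l'})

/-- `|MFS|_min` (in `ℕ∞`). -/
noncomputable def mfsE (SSI SSR : ℕ → Set (List α)) : ℕ∞ :=
  sInf ((fun n : ℕ => (n : ℕ∞)) '' {n : ℕ | 1 ≤ n ∧ ¬ SSI n ⊆ SSR n})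

lemma mss_le_extract {SST SSR : ℕ → Set (List α)} (h0 : SST 0 ⊆ SSR 0) {m : ℕ}
    (hm : (m : ℕ∞) ≤ mssE SST SSR) : ∀ l' ≤ m, SST l' ⊆ SSR l' := by
  by_contra hB
  push_neg at hB
  have hm0 : m ≠ 0 := by
    rintro rfl
    obtain ⟨l', hl', hns⟩ := hB
    interval_cases l'
    exact hns h0
  have hub : ∀ x ∈ ((fun n : ℕ => (n : ℕ∞)) '' {l : ℕ | ∀ l' ≤ l, SST l' ⊆ SSR l'}),
      x ≤ ((m - 1 : ℕ) : ℕ∞) := by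
    rintro x ⟨l, hl, rfl⟩
    have hlm : l < m := by
      by_contra hge
      push_neg at hge
      obtain ⟨l', hl', hns⟩ := hB
      exact hns (hl l' (hl'.trans hge))
    simpa using (show ((l:ℕ∞)) ≤ ((m-1:ℕ):ℕ∞) from by exact_mod_cast Nat.le_sub_one_of_lt hlm)
  have := hm.trans (sSup_le hub)
  have : m ≤ m - 1 := by exact_mod_cast this
  omega

/-- Trimming preserves efficiency: `Σ_nml = Σ_trn^cs ⊙ Σ_tst^cs`, future normal data
`Nw`, intrusive data `I`. -/
theorem stmt18 (Trcs Tscs Nw I : List α) (lam : ℕ∞)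
    (hlam : mssE (SS Tscs) (SS Trcs) = lam) (hpos : 0 < lam)
    (hle : mfsE (SS I) (fun l => SS Trcs l ∪ SS Tscs l ∪ SS Nw l) ≤ lam)
    (h : mfsE (SS I) (fun l => SS Trcs l ∪ SS Tscs l ∪ SS Nw l) ≤
         mssE (SS Nw) (fun l => SS Trcs l ∪ SS Tscs l)) :
    mfsE (SS I) (fun l => SS Trcs l ∪ SS Tscs l ∪ SS Nw l) ≤
      mssE (fun l => SS Tscs l ∪ SS Nw l) (SS Trcs) := by
  set μ := mfsE (SS I) (fun l => SS Trcs l ∪ SS Tscs l ∪ SS Nw l) with hμ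
  have hSS0 : ∀ s : List α, SS s 0 = {([] : List α)} := by
    intro s
    ext x
    simp [SS, List.length_eq_zero_iff]
    rintro rfl
    exact ⟨[], s, by simp⟩
  have key : ∀ m : ℕ, (m : ℕ∞) ≤ μ →
      m ∈ {l : ℕ | ∀ l' ≤ l, (SS Tscs l' ∪ SS Nw l') ⊆ SS Trcs l'} := by
    intro m hm l' hl'
    have h1 : ∀ l'' ≤ m, SS Tscs l'' ⊆ SS Trcs l'' := by
      apply mss_le_extract (by simp [hSS0])
      rw [hlam]; exact hm.trans hle
    have h2 : ∀ l'' ≤ m, SS Nw l'' ⊆ (SS Trcs l'' ∪ SS Tscs l'') := by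
      apply mss_le_extract (by simp [hSS0])
      exact hm.trans h
    rintro x (hx | hx)
    · exact h1 l' hl' hx
    · rcases h2 l' hl' hx with hx' | hx'
      · exact hx'
      · exact h1 l' hl' hx'
  unfold mssE
  cases hμt : μ with
  | top =>
    have htop : sSup ((fun n : ℕ => (n : ℕ∞)) ''
        {l : ℕ | ∀ l' ≤ l, (fun l => SS Tscs l ∪ SS Nw l) l' ⊆ SS Trcs l'}) = ⊤ := by
      rw [sSup_eq_top]
      intro b hb
      lift b to ℕ using hb.ne
      refine ⟨((b+1 : ℕ) : ℕ∞), ⟨b+1, key (b+1) (by simp [hμt]), rfl⟩, ?_⟩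
      exact_mod_cast Nat.lt_succ_self b
    rw [htop]
  | coe n =>
    have hn := key n (le_of_eq hμt.symm)
    exact le_sSup (Set.mem_image_of_mem _ hn)
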